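/- In the polynomial superalgebra ℂ[z₁,z₂]⊗Λ(z₃,z₄), define the Bessel operators B(z₁) = (−λ + z₁∂₁ + z₃∂₃ + z₄∂₄)∂₁ − 2αz₂∂₃∂₄ and B(z₂) = (−λ/α + z₂∂₂ + z₃∂₃ + z₄∂₄)∂₂ − 2z₁∂₃∂₄ (with α ≠ 0). Then B(z₁) and B(z₂) commute: B(z₁)B(z₂) = B(z₂)B(z₁) as operators on polynomials in two even variables z₁, z₂ and two odd (Grassmann) variables z₃, z₄. -/
import Mathlib


open MvPolynomial

/-- The superpolynomial algebra `ℂ[z₁,z₂] ⊗ Λ(z₃,z₄)` in components: index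
`0 ↦` coefficient of `1`, `1 ↦` coefficient of `z₃`, `2 ↦` coefficient of `z₄`,
`3 ↦` coefficient of `z₃z₄`; the even variables are `z₁ = X 0`, `z₂ = X 1`. -/
abbrev SP := Fin 4 → MvPolynomial (Fin 2) ℂ

/-- Bessel operator `B(z₁) = (-λ + z₁∂₁ + z₃∂₃ + z₄∂₄)∂₁ - 2αz₂∂₃∂₄` in components. -/
noncomputable def B1 (α lam : ℂ) (f : SP) : SP :=
  ![C (-lam) * pderiv 0 (f 0) + X 0 * pderiv 0 (pderiv 0 (f 0)) + C (2 * α) * X 1 * f 3,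
    C (1 - lam) * pderiv 0 (f 1) + X 0 * pderiv 0 (pderiv 0 (f 1)),
    C (1 - lam) * pderiv 0 (f 2) + X 0 * pderiv 0 (pderiv 0 (f 2)),
    C (2 - lam) * pderiv 0 (f 3) + X 0 * pderiv 0 (pderiv 0 (f 3))]

/-- Bessel operator `B(z₂) = (-λ/α + z₂∂₂ + z₃∂₃ + z₄∂₄)∂₂ - 2z₁∂₃∂₄` in components. -/
noncomputable def B2 (α lam : ℂ) (f : SP) : SP :=
  ![C (-(lam / α)) * pderiv 1 (f 0) + X 1 * pderiv 1 (pderiv 1 (f 0)) + C 2 * X 0 * f 3,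
    C (1 - lam / α) * pderiv 1 (f 1) + X 1 * pderiv 1 (pderiv 1 (f 1)),
    C (1 - lam / α) * pderiv 1 (f 2) + X 1 * pderiv 1 (pderiv 1 (f 2)),
    C (2 - lam / α) * pderiv 1 (f 3) + X 1 * pderiv 1 (pderiv 1 (f 3))]


lemma pd_comm (p : MvPolynomial (Fin 2) ℂ) :
    pderiv 0 (pderiv 1 p) = pderiv 1 (pderiv 0 p) := by
  induction p using MvPolynomial.induction_on with
  | C a => simp [pderiv_C]
  | add p q hp hq => simp [hp, hq]
  | mul_X p i hp => fin_cases i <;> simp [pderiv_mul, hp] <;> ring_nf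

lemma pd01 (p : MvPolynomial (Fin 2) ℂ) : pderiv (0 : Fin 2) (X 1 * p) = X 1 * pderiv 0 p := by
  simp [pderiv_mul]
lemma pd10 (p : MvPolynomial (Fin 2) ℂ) : pderiv (1 : Fin 2) (X 0 * p) = X 0 * pderiv 1 p := by
  simp [pderiv_mul]
lemma pd00 (p : MvPolynomial (Fin 2) ℂ) :
    pderiv (0 : Fin 2) (X 0 * p) = p + X 0 * pderiv 0 p := by
  simp [pderiv_mul]; ring_nf
lemma pd11 (p : MvPolynomial (Fin 2) ℂ) :
    pderiv (1 : Fin 2) (X 1 * p) = p + X 1 * pderiv 1 p := by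
  simp [pderiv_mul]; ring_nf

/-- The Bessel operators `B(z₁)` and `B(z₂)` commute. -/
theorem stmt15 (α lam : ℂ) (hα : α ≠ 0) (f : SP) :
    B1 α lam (B2 α lam f) = B2 α lam (B1 α lam f) := by
  obtain ⟨μ, rfl⟩ : ∃ μ, lam = μ * α := ⟨lam / α, (div_mul_cancel₀ lam hα).symm⟩
  have hμ : μ * α / α = μ := mul_div_cancel_right₀ μ hα
  funext i
  fin_cases i <;>
    simp only [B1, B2, hμ, Fin.zero_eta, Fin.mk_one, Fin.isValue, Matrix.cons_val_zero,
      Matrix.cons_val_one, Matrix.head_cons, Matrix.cons_val_two, Matrix.tail_cons,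
      Matrix.cons_val_three, Matrix.cons_val_fin_one, mul_assoc, map_add, pderiv_C_mul,
      pd00, pd11, pd01, pd10, pd_comm] <;>
    simp only [map_neg, map_mul, map_sub, map_one, map_ofNat] <;>
    ring
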